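/- Let T be an isometry of a nondegenerate space (V,B) over a field F of characteristic different from 2. Suppose the minimal polynomial of T is q(X)^d · q*(X)^d, where q ∈ F[X] is monic irreducible with q(0) ≠ 0, q* is the dual polynomial of q, and q* ≠ q. Set W = ker q(T)^d and W* = ker q*(T)^d. Then V is the internal direct sum of W and W*, B vanishes identically on W and also on W* (both are totally isotropic), and dim W = dim W* = (dim V)/2. -/

import Mathlib

/-- The group of isometries of a bilinear space `(V, B)`, as a subgroup of the
group of linear automorphisms of `V`. -/
def isometryGroup (F : Type*) [Field F] {V : Type*} [AddCommGroup V] [Module F V]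
    (B : LinearMap.BilinForm F V) : Subgroup (V ≃ₗ[F] V) where
  carrier := {T | ∀ u v : V, B (T u) (T v) = B u v}
  one_mem' := by intro u v; rfl
  mul_mem' := by
    intro a b ha hb u v
    have h1 : (a * b) u = a (b u) := rfl
    have h2 : (a * b) v = a (b v) := rfl
    rw [h1, h2, ha, hb]
  inv_mem' := by
    intro a ha u v
    have h := ha (a⁻¹ u) (a⁻¹ v)
    have h1 : a (a⁻¹ u) = u := a.apply_symm_apply u
    have h2 : a (a⁻¹ v) = v := a.apply_symm_apply v
    rw [h1, h2] at h
    exact h.symm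


open Polynomial

/-- The dual of a polynomial `f` (with `f(0) ≠ 0`): `f*(X) = f(0)⁻¹ · Xⁿ · f(1/X)`,
i.e. `f(0)⁻¹` times the reverse of `f`. -/
noncomputable def dualPoly {F : Type*} [Field F] (f : Polynomial F) : Polynomial F :=
  Polynomial.C ((f.eval 0)⁻¹) * f.reverse

/-!
Since `q^d` and `(q*)^d` are coprime and their product kills `T`, `V = W ⊕ W*`; moreover
`W ⊆ range (q*)^d(T)` and `W* ⊆ range q^d(T)`. Reversing coefficients gives
`p*(T⁻¹) = p(0)⁻¹ T^{-deg p} p(T)`, so `ker p(T) = ker p*(T⁻¹)`; applied to `T` and to `T⁻¹`,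
this says that `(q*)^d(T⁻¹)` kills `W` and `q^d(T⁻¹)` kills `W*`. As `T` is an isometry, `p(T⁻¹)`
is the `B`-adjoint of `p(T)`, so for `u, v ∈ W`, writing `v = (q*)^d(T) w` gives
`B u v = B ((q*)^d(T⁻¹) u) w = 0`, and symmetrically for `W*`. A totally isotropic subspace of a
nondegenerate space has at most half its dimension, so both have exactly half.
-/

open LinearMap

namespace Polynomial

theorem ker_aeval_le_range_aeval_of_isCoprime {R M : Type*} [CommRing R] [AddCommGroup M]
    [Module R M] (φ : Module.End R M) {p q : R[X]} (hpq : IsCoprime p q) :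
    ker (aeval φ p) ≤ range (aeval φ q) := by
  obtain ⟨a, b, hab⟩ := hpq
  intro v hv
  refine ⟨aeval φ b v, ?_⟩
  have hv' : aeval φ (a * p + b * q) v = v := by rw [hab, map_one, Module.End.one_apply]
  rwa [map_add, LinearMap.add_apply, aeval_mul, Module.End.mul_apply, mem_ker.mp hv, map_zero,
    zero_add, mul_comm, aeval_mul, Module.End.mul_apply] at hv'

variable {R A : Type*} [CommSemiring R] [Semiring A] [Algebra R A]

theorem aeval_units_inv_reflect (u : Aˣ) {N : ℕ} {f : R[X]} (hf : f.natDegree ≤ N) :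
    aeval (↑u⁻¹ : A) (reflect N f) = ↑u⁻¹ ^ N * aeval (u : A) f := by
  refine induction_with_natDegree_le
    (fun f => aeval (↑u⁻¹ : A) (reflect N f) = ↑u⁻¹ ^ N * aeval (u : A) f) N ?_ ?_ ?_ f hf
  · simp
  · intro n r _ hnN
    have hpow : (↑u⁻¹ : A) ^ (N - n) = ↑u⁻¹ ^ N * ↑u ^ n := by
      obtain ⟨k, rfl⟩ := Nat.exists_eq_add_of_le hnN
      simp only [Nat.add_sub_cancel_left, ← Units.val_pow_eq_pow_val, ← Units.val_mul]
      congr 1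
      group
    rw [reflect_C_mul_X_pow, revAt_le hnN, aeval_mul, aeval_mul, aeval_C, aeval_C, aeval_X_pow,
      aeval_X_pow, hpow, ← mul_assoc, ← mul_assoc, Algebra.commutes]
  · intro f g _ _ hf hg
    rw [reflect_add, map_add, hf, hg, map_add, mul_add]

end Polynomial

section DualPoly

variable {F : Type*} [Field F]

theorem dualPoly_one : dualPoly (1 : F[X]) = 1 := by
  simp [dualPoly, reverse, reflect_one]

theorem dualPoly_mul (p q : F[X]) : dualPoly (p * q) = dualPoly p * dualPoly q := by
  simp only [dualPoly, eval_mul, mul_inv, C_mul, reverse_mul_of_domain]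
  ring

theorem dualPoly_pow (p : F[X]) (n : ℕ) : dualPoly (p ^ n) = dualPoly p ^ n := by
  induction n with
  | zero => exact dualPoly_one
  | succ n ih => rw [pow_succ, dualPoly_mul, ih, pow_succ]

theorem natTrailingDegree_eq_zero_of_eval_zero_ne_zero {p : F[X]} (h0 : p.eval 0 ≠ 0) :
    p.natTrailingDegree = 0 :=
  natTrailingDegree_eq_zero.mpr (Or.inr (by rwa [coeff_zero_eq_eval_zero]))

theorem monic_dualPoly {p : F[X]} (h0 : p.eval 0 ≠ 0) : (dualPoly p).Monic := by
  rw [dualPoly, Monic, leadingCoeff_mul, leadingCoeff_C, reverse_leadingCoeff, trailingCoeff,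
    natTrailingDegree_eq_zero_of_eval_zero_ne_zero h0, coeff_zero_eq_eval_zero,
    inv_mul_cancel₀ h0]

theorem natDegree_dualPoly {p : F[X]} (h0 : p.eval 0 ≠ 0) :
    (dualPoly p).natDegree = p.natDegree := by
  rw [dualPoly, natDegree_C_mul (inv_ne_zero h0), reverse_natDegree,
    natTrailingDegree_eq_zero_of_eval_zero_ne_zero h0, Nat.sub_zero]

theorem isCoprime_dualPoly_of_irreducible {q : F[X]} (hqm : q.Monic) (hqi : Irreducible q)
    (hq0 : q.eval 0 ≠ 0) (hqd : dualPoly q ≠ q) : IsCoprime q (dualPoly q) :=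
  hqi.coprime_iff_not_dvd.mpr fun hdvd =>
    hqd (eq_of_monic_of_dvd_of_natDegree_le hqm (monic_dualPoly hq0) hdvd
      (natDegree_dualPoly hq0).le)

theorem aeval_units_inv_dualPoly {A : Type*} [Semiring A] [Algebra F A] (u : Aˣ) (f : F[X]) :
    aeval (↑u⁻¹ : A) (dualPoly f) = (f.eval 0)⁻¹ • (↑u⁻¹ ^ f.natDegree * aeval (u : A) f) := by
  rw [dualPoly, aeval_mul, aeval_C, reverse, aeval_units_inv_reflect u le_rfl, Algebra.smul_def]

theorem ker_aeval_units_inv_dualPoly {V : Type*} [AddCommGroup V] [Module F V]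
    (u : (Module.End F V)ˣ) {f : F[X]} (h0 : f.eval 0 ≠ 0) :
    ker (aeval (↑u⁻¹ : Module.End F V) (dualPoly f)) = ker (aeval (u : Module.End F V) f) := by
  have hinj : ker ((↑u⁻¹ : Module.End F V) ^ f.natDegree) = ⊥ :=
    ker_eq_bot.mpr (Module.End.isUnit_iff _ |>.mp ((u⁻¹).isUnit.pow _)).injective
  rw [aeval_units_inv_dualPoly, ker_smul _ _ (inv_ne_zero h0), Module.End.mul_eq_comp,
    ker_comp_of_ker_eq_bot _ hinj]

end DualPoly

namespace LinearMap

variable {R M : Type*} [CommRing R] [AddCommGroup M] [Module R M] {B : LinearMap.BilinForm R M}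

theorem IsAdjointPair.aeval {f g : Module.End R M} (h : IsAdjointPair B B f g) (p : R[X]) :
    IsAdjointPair B B (aeval f p) (aeval g p) := by
  induction p using Polynomial.induction_on with
  | C a => simpa [Algebra.algebraMap_eq_smul_one] using isAdjointPair_one.smul a
  | add p q hp hq =>
    rw [map_add, map_add]
    exact hp.add hq
  | monomial n a ih =>
    have hf : Polynomial.aeval f (C a * X ^ (n + 1)) = Polynomial.aeval f (C a * X ^ n) * f := by
      rw [pow_succ, ← mul_assoc, aeval_mul, aeval_X]
    have hg : Polynomial.aeval g (C a * X ^ (n + 1)) = g * Polynomial.aeval g (C a * X ^ n) := by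
      rw [pow_succ, ← mul_assoc, mul_comm, aeval_mul, aeval_X]
    rw [hf, hg]
    exact ih.mul h

theorem ker_aeval_le_orthogonal {f g : Module.End R M} (hfg : IsAdjointPair B B f g)
    {p q : R[X]} (hpq : IsCoprime p q) (hker : ker (aeval g p) ≤ ker (aeval f q)) :
    ker (aeval g p) ≤ B.orthogonal (ker (aeval g p)) := by
  intro v hv u hu
  obtain ⟨w, rfl⟩ := ker_aeval_le_range_aeval_of_isCoprime g hpq hv
  rw [← hfg.aeval q u w, mem_ker.mp (hker hu), map_zero, zero_apply]

theorem BilinForm.two_mul_finrank_le_of_le_orthogonal {K V : Type*} [Field K] [AddCommGroup V]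
    [Module K V] [FiniteDimensional K V] {B : LinearMap.BilinForm K V} (hB : B.Nondegenerate)
    {U : Submodule K V} (hU : U ≤ B.orthogonal U) :
    2 * Module.finrank K U ≤ Module.finrank K V := by
  have := Submodule.finrank_mono hU
  rw [BilinForm.finrank_orthogonal hB] at this
  have := Submodule.finrank_le U
  omega

end LinearMap

theorem dual_pair_decomposition_general
    (F : Type*) [Field F]
    (V : Type*) [AddCommGroup V] [Module F V] [FiniteDimensional F V]
    (B : LinearMap.BilinForm F V) (hnd : B.Nondegenerate)
    (T : V ≃ₗ[F] V) (hT : T ∈ isometryGroup F B)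
    (q : Polynomial F) (hqm : q.Monic) (hqi : Irreducible q) (hq0 : q.eval 0 ≠ 0)
    (hqd : dualPoly q ≠ q) (d : ℕ)
    (hmin : minpoly F ((T : V →ₗ[F] V) : Module.End F V) = q ^ d * (dualPoly q) ^ d)
    (W Wd : Submodule F V)
    (hW : W = LinearMap.ker ((Polynomial.aeval ((T : V →ₗ[F] V) : Module.End F V) q) ^ d))
    (hWd : Wd = LinearMap.ker
      ((Polynomial.aeval ((T : V →ₗ[F] V) : Module.End F V) (dualPoly q)) ^ d)) :
    IsCompl W Wd ∧
    (∀ u ∈ W, ∀ v ∈ W, B u v = 0) ∧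
    (∀ u ∈ Wd, ∀ v ∈ Wd, B u v = 0) ∧
    Module.finrank F W = Module.finrank F Wd ∧
    2 * Module.finrank F W = Module.finrank F V := by
  let u := LinearMap.GeneralLinearGroup.ofLinearEquiv T
  have hadj : IsAdjointPair B B ↑u⁻¹ ↑u := fun x y =>
    (by simpa using (hT (T.symm x) y).symm : B (T.symm x) y = B x (T y))
  have hf0 : (q ^ d).eval 0 ≠ 0 := by rw [eval_pow]; exact pow_ne_zero d hq0
  have hcop : IsCoprime (q ^ d) (dualPoly (q ^ d)) := by
    rw [dualPoly_pow]; exact (isCoprime_dualPoly_of_irreducible hqm hqi hq0 hqd).pow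
  replace hW : W = ker (aeval (u : Module.End F V) (q ^ d)) := by rw [hW, map_pow]; rfl
  replace hWd : Wd = ker (aeval (u : Module.End F V) (dualPoly (q ^ d))) := by
    rw [hWd, dualPoly_pow, map_pow]; rfl
  have hcompl : IsCompl W Wd := by
    refine hW ▸ hWd ▸ ⟨disjoint_ker_aeval_of_isCoprime _ hcop, codisjoint_iff.mpr ?_⟩
    have hminu : minpoly F (u : Module.End F V) = q ^ d * dualPoly q ^ d := hmin
    rw [sup_ker_aeval_eq_ker_aeval_mul_of_coprime _ hcop, dualPoly_pow, ← hminu, minpoly.aeval,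
      ker_zero]
  have hWiso : W ≤ B.orthogonal W :=
    hW ▸ ker_aeval_le_orthogonal hadj hcop (ker_aeval_units_inv_dualPoly u hf0).ge
  have hWdiso : Wd ≤ B.orthogonal Wd :=
    hWd ▸ ker_aeval_le_orthogonal hadj hcop.symm
      (by simpa using (ker_aeval_units_inv_dualPoly u⁻¹ hf0).le)
  have hsum := Submodule.finrank_add_eq_of_isCompl hcompl
  have hWdim := BilinForm.two_mul_finrank_le_of_le_orthogonal hnd hWiso
  have hWddim := BilinForm.two_mul_finrank_le_of_le_orthogonal hnd hWdiso
  exact ⟨hcompl, fun x hx y hy => hWiso hy x hx, fun x hx y hy => hWdiso hy x hx, by omega,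
    by omega⟩

/-- If the minimal polynomial of an isometry `T` is `q^d · (q*)^d` with `q`
monic irreducible, `q(0) ≠ 0` and `q* ≠ q`, then `V` is the internal direct sum
of the totally isotropic subspaces `W = ker q(T)^d` and `W* = ker q*(T)^d`, each
of dimension `(dim V)/2`. -/
theorem dual_pair_decomposition
    (F : Type*) [Field F] (hchar : ringChar F ≠ 2)
    (V : Type*) [AddCommGroup V] [Module F V] [FiniteDimensional F V]
    (B : LinearMap.BilinForm F V) (hB : B.IsSymm ∨ B.IsAlt) (hnd : B.Nondegenerate)
    (T : V ≃ₗ[F] V) (hT : T ∈ isometryGroup F B)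
    (q : Polynomial F) (hqm : q.Monic) (hqi : Irreducible q) (hq0 : q.eval 0 ≠ 0)
    (hqd : dualPoly q ≠ q) (d : ℕ) (hd : 0 < d)
    (hmin : minpoly F ((T : V →ₗ[F] V) : Module.End F V) = q ^ d * (dualPoly q) ^ d)
    (W Wd : Submodule F V)
    (hW : W = LinearMap.ker ((Polynomial.aeval ((T : V →ₗ[F] V) : Module.End F V) q) ^ d))
    (hWd : Wd = LinearMap.ker
      ((Polynomial.aeval ((T : V →ₗ[F] V) : Module.End F V) (dualPoly q)) ^ d)) :
    IsCompl W Wd ∧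
    (∀ u ∈ W, ∀ v ∈ W, B u v = 0) ∧
    (∀ u ∈ Wd, ∀ v ∈ Wd, B u v = 0) ∧
    Module.finrank F W = Module.finrank F Wd ∧
    2 * Module.finrank F W = Module.finrank F V :=
  dual_pair_decomposition_general F V B hnd T hT q hqm hqi hq0 hqd d hmin W Wd hW hWd
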